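/- Let S = {a₁,…,a_{3r}} with natural-number values v satisfying T/4 < v(aᵢ) < T/2 and ∑ v(aᵢ) = rT. Then S can be partitioned into r triples each summing to T if and only if, in the associated two-layer network (source s, items aᵢ, hub q, bins b₁,…,b_r, sink t, with capacities v(aᵢ) on arcs sa_i and a_iq, and T on arcs qb_j and b_jt), the saturating (s,t)-flow of value rT can be decomposed into (s,t)-path flows such that each path through bin b_j carries the full value v(aᵢ) of a single item and exactly three paths use each bin. -/
import Mathlib


/-- A multidigraph: a set of arcs `E` over vertices `V`, with source and destination maps. -/
structure MultiDigraph (V E : Type) where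
  src : E → V
  dst : E → V

namespace MultiDigraph

variable {V E : Type}

/-- `p` is a directed walk from `u` to `v` (as a list of consecutive arcs). -/
def IsWalk (D : MultiDigraph V E) : V → V → List E → Prop
  | u, v, [] => u = v
  | u, v, e :: p => D.src e = u ∧ D.IsWalk (D.dst e) v p

/-- A directed path from `u` to `v`: a walk without repeated arcs. -/
def IsPath (D : MultiDigraph V E) (u v : V) (p : List E) : Prop :=
  D.IsWalk u v p ∧ p.Nodup

/-- A directed cycle: a nonempty closed walk without repeated arcs. -/
def IsCycle (D : MultiDigraph V E) (p : List E) : Prop :=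
  p ≠ [] ∧ p.Nodup ∧ ∃ u, D.IsWalk u u p

/-- The flow sending value `r` along each arc of `p` and `0` elsewhere. -/
def pathFlow [DecidableEq E] (p : List E) (r : ℝ) : E → ℝ :=
  fun e => if e ∈ p then r else 0

variable [Fintype E] [DecidableEq V]

/-- Net flow out of a vertex `v` (outflow minus inflow), i.e. the balance `b_x(v)`. -/
def excess (D : MultiDigraph V E) (x : E → ℝ) (v : V) : ℝ :=
  (∑ e : E, if D.src e = v then x e else 0) - (∑ e : E, if D.dst e = v then x e else 0)

/-- An `(s,t)`-flow: nonnegative and conserved at every vertex other than `s` and `t`. -/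
def IsSTFlow (D : MultiDigraph V E) (s t : V) (x : E → ℝ) : Prop :=
  (∀ e, 0 ≤ x e) ∧ ∀ v, v ≠ s → v ≠ t → D.excess x v = 0

/-- `x` respects the capacity function `u`. -/
def IsFlowUnder (D : MultiDigraph V E) (u x : E → ℝ) : Prop :=
  ∀ e, 0 ≤ x e ∧ x e ≤ u e

/-- `x` is a maximum `(s,t)`-flow with respect to capacities `u`. -/
def IsMaxFlow (D : MultiDigraph V E) (u : E → ℝ) (s t : V) (x : E → ℝ) : Prop :=
  D.IsFlowUnder u x ∧ D.IsSTFlow s t x ∧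
    ∀ y, D.IsFlowUnder u y → D.IsSTFlow s t y → D.excess y s ≤ D.excess x s

/-- A circulation: a (finite) sum of cycle flows. -/
def IsCirculation [DecidableEq E] (D : MultiDigraph V E) (c : E → ℝ) : Prop :=
  ∃ (n : ℕ) (C : Fin n → List E) (r : Fin n → ℝ),
    (∀ i, D.IsCycle (C i) ∧ 0 < r i) ∧ c = ∑ i, pathFlow (C i) (r i)

/-- `x` decomposes into exactly `k` `(s,t)`-path flows. -/
def Splittable [DecidableEq E] (D : MultiDigraph V E) (s t : V) (x : E → ℝ) (k : ℕ) : Prop :=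
  ∃ (P : Fin k → List E) (r : Fin k → ℝ),
    (∀ i, D.IsPath s t (P i) ∧ 0 < r i) ∧ x = ∑ i, pathFlow (P i) (r i)

/-- `x` decomposes into exactly `k` `(s,t)`-path flows, plus possibly a circulation. -/
def SplittableC [DecidableEq E] (D : MultiDigraph V E) (s t : V) (x : E → ℝ) (k : ℕ) : Prop :=
  ∃ (P : Fin k → List E) (r : Fin k → ℝ) (c : E → ℝ),
    D.IsCirculation c ∧ (∀ i, D.IsPath s t (P i) ∧ 0 < r i) ∧
    x = c + ∑ i, pathFlow (P i) (r i)

/-- The cost of a path: its number of distinct colours. -/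
def pathCost {C : Type} [DecidableEq C] (col : E → C) (p : List E) : ℕ :=
  (p.map col).toFinset.card

/-- `x` admits a decomposition into `(s,t)`-path flows (plus possibly a circulation,
which does not affect the cost) whose total colour-cost is `K`. -/
def DecompCost [DecidableEq E] {C : Type} [DecidableEq C] (D : MultiDigraph V E)
    (col : E → C) (s t : V) (x : E → ℝ) (K : ℕ) : Prop :=
  ∃ (k : ℕ) (P : Fin k → List E) (r : Fin k → ℝ) (c : E → ℝ),
    D.IsCirculation c ∧ (∀ i, D.IsPath s t (P i) ∧ 0 < r i) ∧
    x = c + ∑ i, pathFlow (P i) (r i) ∧ ∑ i, pathCost col (P i) = K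

/-- `x` admits a decomposition into `(s,t)`-path flows (only) of total colour-cost `K`. -/
def DecompCostPure [DecidableEq E] {C : Type} [DecidableEq C] (D : MultiDigraph V E)
    (col : E → C) (s t : V) (x : E → ℝ) (K : ℕ) : Prop :=
  ∃ (k : ℕ) (P : Fin k → List E) (r : Fin k → ℝ),
    (∀ i, D.IsPath s t (P i) ∧ 0 < r i) ∧
    x = ∑ i, pathFlow (P i) (r i) ∧ ∑ i, pathCost col (P i) = K

end MultiDigraph

open MultiDigraph

/-- Arcs of the two-layer 3-Partition network: `s→aᵢ`, `aᵢ→q`, `q→bⱼ`, `bⱼ→t`. -/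
inductive PArc (r : ℕ) where
  | sa (i : Fin (3 * r))
  | aq (i : Fin (3 * r))
  | qb (j : Fin r)
  | bt (j : Fin r)
deriving DecidableEq, Fintype

/-- The two-layer network, with vertices encoded as naturals:
`s = 0`, `q = 1`, `t = 2`, item `aᵢ = 3 + i`, bin `bⱼ = 3 + 3r + j`. -/
def partNet (r : ℕ) : MultiDigraph ℕ (PArc r) where
  src := fun e => match e with
    | .sa _ => 0
    | .aq i => 3 + (i : ℕ)
    | .qb _ => 1
    | .bt j => 3 + 3 * r + (j : ℕ)
  dst := fun e => match e with
    | .sa i => 3 + (i : ℕ)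
    | .aq _ => 1
    | .qb j => 3 + 3 * r + (j : ℕ)
    | .bt _ => 2

/-- The saturating flow: `v(aᵢ)` on the item arcs, `T` on the bin arcs. -/
def partFlow (r T : ℕ) (v : Fin (3 * r) → ℕ) : PArc r → ℝ := fun e => match e with
  | .sa i => (v i : ℝ)
  | .aq i => (v i : ℝ)
  | .qb _ => (T : ℝ)
  | .bt _ => (T : ℝ)

/-- `S` can be partitioned into `r` triples each summing to `T` if and only if the
saturating `(s,t)`-flow of value `rT` in the associated two-layer network can be
decomposed into `(s,t)`-path flows such that each path carries the full value `v(aᵢ)`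
of the single item it traverses and exactly three paths use each bin. -/
theorem stmt7 (r T : ℕ) (hr : 0 < r) (v : Fin (3 * r) → ℕ)
    (hv : ∀ i, T < 4 * v i ∧ 2 * v i < T)
    (hsum : ∑ i, v i = r * T) :
    (∃ f : Fin (3 * r) → Fin r, ∀ j : Fin r,
        (Finset.univ.filter fun i => f i = j).card = 3 ∧
        ∑ i ∈ Finset.univ.filter (fun i => f i = j), v i = T) ↔
    (∃ (k : ℕ) (P : Fin k → List (PArc r)) (w : Fin k → ℝ),
        (∀ p, (partNet r).IsPath 0 2 (P p) ∧ 0 < w p) ∧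
        partFlow r T v = ∑ p, pathFlow (P p) (w p) ∧
        (∀ p, ∃ (i : Fin (3 * r)) (j : Fin r),
            P p = [.sa i, .aq i, .qb j, .bt j] ∧ w p = (v i : ℝ)) ∧
        (∀ j : Fin r, (Finset.univ.filter fun p => PArc.qb j ∈ P p).card = 3)) := by
  have hvpos : ∀ i, 0 < v i := fun i => by have := hv i; omega
  constructor
  · rintro ⟨f, hf⟩
    refine ⟨3 * r, fun i => [.sa i, .aq i, .qb (f i), .bt (f i)],
      fun i => (v i : ℝ), ?_, ?_, ?_, ?_⟩
    · intro p
      refine ⟨⟨?_, ?_⟩, ?_⟩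
      · simp [MultiDigraph.IsWalk, partNet]
      · simp
      · show (0 : ℝ) < (v p : ℝ)
        exact_mod_cast hvpos p
    · funext e
      have hF : (∑ p, pathFlow [PArc.sa p, .aq p, .qb (f p), .bt (f p)] ((v p : ℝ))) e
          = ∑ p, pathFlow [PArc.sa p, .aq p, .qb (f p), .bt (f p)] ((v p : ℝ)) e :=
        Finset.sum_apply e _ _
      rw [hF]
      cases e with
      | sa i =>
        simp only [partFlow, pathFlow, List.mem_cons, List.not_mem_nil, or_false,
          PArc.sa.injEq, reduceCtorEq, false_or]
        rw [Finset.sum_ite_eq Finset.univ i (fun p => (v p : ℝ))]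
        simp
      | aq i =>
        simp only [partFlow, pathFlow, List.mem_cons, List.not_mem_nil, or_false,
          PArc.aq.injEq, reduceCtorEq, false_or, or_false]
        rw [Finset.sum_ite_eq Finset.univ i (fun p => (v p : ℝ))]
        simp
      | qb j =>
        simp only [partFlow, pathFlow, List.mem_cons, List.not_mem_nil, or_false,
          PArc.qb.injEq, reduceCtorEq, false_or, or_false]
        rw [← Finset.sum_filter,
          show (Finset.univ.filter fun p => j = f p)
            = Finset.univ.filter (fun p => f p = j) from
            Finset.filter_congr fun p _ => by simp [eq_comm],
          ← Nat.cast_sum, (hf j).2]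
      | bt j =>
        simp only [partFlow, pathFlow, List.mem_cons, List.not_mem_nil, or_false,
          PArc.bt.injEq, reduceCtorEq, false_or, or_false]
        rw [← Finset.sum_filter,
          show (Finset.univ.filter fun p => j = f p)
            = Finset.univ.filter (fun p => f p = j) from
            Finset.filter_congr fun p _ => by simp [eq_comm],
          ← Nat.cast_sum, (hf j).2]
    · intro p; exact ⟨p, f p, rfl, rfl⟩
    · intro j
      have heq : (Finset.univ.filter fun p =>
            PArc.qb j ∈ (fun i => [PArc.sa i, PArc.aq i, PArc.qb (f i), PArc.bt (f i)]) p)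
          = Finset.univ.filter fun p => f p = j :=
        Finset.filter_congr fun p _ => by simp [eq_comm]
      rw [heq]
      exact (hf j).1
  · rintro ⟨k, P, w, hPw, hflow, hstruct, hcount⟩
    choose item bin hP hw using hstruct
    have hmem_sa : ∀ p i, PArc.sa i ∈ P p ↔ item p = i := by
      intro p i; rw [hP p]; simp [eq_comm]
    have hmem_qb : ∀ p j, PArc.qb j ∈ P p ↔ bin p = j := by
      intro p j; rw [hP p]; simp [eq_comm]
    have hval : ∀ (e : PArc r), partFlow r T v e = ∑ p, pathFlow (P p) (w p) e := by
      intro e; rw [hflow]; exact Finset.sum_apply e _ _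
    -- flow through arc sa i
    have hsa : ∀ i, (v i : ℝ)
        = ((Finset.univ.filter fun p => item p = i).card : ℝ) * (v i : ℝ) := by
      intro i
      have h := hval (.sa i)
      simp only [partFlow, pathFlow] at h
      have hfe : (Finset.univ.filter fun p => PArc.sa i ∈ P p)
          = Finset.univ.filter (fun p => item p = i) :=
        Finset.filter_congr fun p _ => by simp [hmem_sa p i]
      have hsc : ∑ p ∈ Finset.univ.filter (fun p => item p = i), w p
          = ∑ _p ∈ Finset.univ.filter (fun p => item p = i), (v i : ℝ) :=
        Finset.sum_congr rfl fun p hp => by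
          simp only [Finset.mem_filter] at hp
          rw [hw p, hp.2]
      rw [← Finset.sum_filter, hfe, hsc, Finset.sum_const, nsmul_eq_mul] at h
      exact h
    have hone : ∀ i, (Finset.univ.filter fun p => item p = i).card = 1 := by
      intro i
      have hvne : (v i : ℝ) ≠ 0 := Nat.cast_ne_zero.mpr (hvpos i).ne'
      have h1 : (1 : ℝ) * (v i : ℝ)
          = ((Finset.univ.filter fun p => item p = i).card : ℝ) * (v i : ℝ) := by
        rw [one_mul]; exact hsa i
      have := mul_right_cancel₀ hvne h1
      exact_mod_cast this.symm
    have hinj : Function.Injective item := by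
      intro p q hpq
      obtain ⟨a, ha⟩ := Finset.card_eq_one.mp (hone (item p))
      have hp : p ∈ Finset.univ.filter fun x => item x = item p := by simp
      have hq : q ∈ Finset.univ.filter fun x => item x = item p := by simp [hpq]
      rw [ha, Finset.mem_singleton] at hp hq
      rw [hp, hq]
    have hsurj : Function.Surjective item := by
      intro i
      obtain ⟨a, ha⟩ := Finset.card_eq_one.mp (hone i)
      have : a ∈ Finset.univ.filter fun x => item x = i := by
        rw [ha]; exact Finset.mem_singleton_self a
      simp only [Finset.mem_filter] at this
      exact ⟨a, this.2⟩
    let e : Fin k ≃ Fin (3 * r) := Equiv.ofBijective item ⟨hinj, hsurj⟩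
    have hitem_symm : ∀ i, item (e.symm i) = i := fun i => e.apply_symm_apply i
    refine ⟨fun i => bin (e.symm i), fun j => ⟨?_, ?_⟩⟩
    · have hc3 : (Finset.univ.filter fun i => bin (e.symm i) = j).card
          = (Finset.univ.filter fun p => PArc.qb j ∈ P p).card := by
        apply Finset.card_bij (fun i _ => e.symm i)
        · intro i hi
          simp only [Finset.mem_filter, Finset.mem_univ, true_and] at hi ⊢
          rw [hmem_qb]; exact hi
        · intro i _ i' _ hii'
          exact e.symm.injective hii'
        · intro p hp
          simp only [Finset.mem_filter, Finset.mem_univ, true_and] at hp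
          refine ⟨e p, ?_, by simp⟩
          simp only [Finset.mem_filter, Finset.mem_univ, true_and,
            Equiv.symm_apply_apply]
          rw [← hmem_qb]; exact hp
      exact hc3.trans (hcount j)
    · have h := hval (.qb j)
      simp only [partFlow, pathFlow] at h
      rw [← Finset.sum_filter,
        show (Finset.univ.filter fun p => PArc.qb j ∈ P p)
          = Finset.univ.filter (fun p => bin p = j) from
          Finset.filter_congr fun p _ => by simp [hmem_qb p j]] at h
      have h3 : ∑ i ∈ Finset.univ.filter (fun i => bin (e.symm i) = j), (v i : ℝ)
          = ∑ p ∈ Finset.univ.filter (fun p => bin p = j), w p := by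
        apply Finset.sum_bij (fun i _ => e.symm i)
        · intro i hi
          simp only [Finset.mem_filter, Finset.mem_univ, true_and] at hi ⊢
          exact hi
        · intro i _ i' _ hii'
          exact e.symm.injective hii'
        · intro p hp
          simp only [Finset.mem_filter, Finset.mem_univ, true_and] at hp
          exact ⟨e p, by simpa using hp, by simp⟩
        · intro i _
          rw [hw, hitem_symm]
      have h4 : ((∑ i ∈ Finset.univ.filter (fun i => bin (e.symm i) = j), v i : ℕ) : ℝ)
          = (T : ℝ) := by
        push_cast
        rw [h3, ← h]
      exact_mod_cast h4
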